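/- arXiv:0906.1443 — 5 statements merged into one kernel-verified Lean document; each statement's English description precedes it below -/
import Mathlib

section
/- Let L ∈ (0, ∞] and let Φ : (0,L) → ℝ be a C¹ function with Φ' > 0 on (0,L). Then for every smooth function ξ : (0,L) → ℝ with compact support in (0,L), one has ∫₀ᴸ (4 Φ(t)² / Φ'(t)) ξ'(t)² dt ≥ ∫₀ᴸ Φ'(t) ξ(t)² dt. -/
open MeasureTheory Set
open scoped ENNReal

/-- Generalized Hardy inequality: for `L ∈ (0, ∞]` and `Φ` a `C¹` function on `(0,L)`
with `Φ' > 0`, every smooth `ξ` with compact support in `(0,L)` satisfies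
`∫₀ᴸ (4 Φ² / Φ') ξ'² ≥ ∫₀ᴸ Φ' ξ²`. -/
theorem generalized_hardy (L : ℝ≥0∞) (hL : 0 < L)
    (S : Set ℝ) (hS : S = {t : ℝ | 0 < t ∧ ENNReal.ofReal t < L})
    (Φ Φ' : ℝ → ℝ)
    (hΦ : ∀ t ∈ S, HasDerivAt Φ (Φ' t) t)
    (hΦ'cont : ContinuousOn Φ' S)
    (hΦ'pos : ∀ t ∈ S, 0 < Φ' t)
    (ξ : ℝ → ℝ) (hξ : ContDiff ℝ (⊤ : ℕ∞) ξ)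
    (hξsupp : HasCompactSupport ξ) (hξin : tsupport ξ ⊆ S) :
    ∫ t in S, Φ' t * ξ t ^ 2 ≤ ∫ t in S, 4 * Φ t ^ 2 / Φ' t * (deriv ξ t) ^ 2 := by
  by_cases hK : tsupport ξ = ∅
  · have h0 : ξ = fun _ => 0 := by
      funext t
      by_contra h
      have : t ∈ tsupport ξ := subset_tsupport ξ (by simpa [Function.mem_support] using h)
      simp [hK] at this
    rw [h0]
    simp
  have hKc : IsCompact (tsupport ξ) := hξsupp
  have hKne : (tsupport ξ).Nonempty := nonempty_iff_ne_empty.2 hK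
  set a := sInf (tsupport ξ) with ha_def
  set b := sSup (tsupport ξ) with hb_def
  have haK : a ∈ tsupport ξ := hKc.sInf_mem hKne
  have hbK : b ∈ tsupport ξ := hKc.sSup_mem hKne
  have hKsub : tsupport ξ ⊆ Icc a b := fun t ht =>
    ⟨csInf_le hKc.bddBelow ht, le_csSup hKc.bddAbove ht⟩
  have hab : a ≤ b := (hKsub haK).2
  have haS : a ∈ S := hξin haK
  have hbS : b ∈ S := hξin hbK
  have hIccS : Icc a b ⊆ S := by
    intro t ht
    rw [hS] at haS hbS ⊢
    exact ⟨lt_of_lt_of_le haS.1 ht.1,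
      lt_of_le_of_lt (ENNReal.ofReal_le_ofReal ht.2) hbS.2⟩
  have hξc : Continuous ξ := hξ.continuous
  have hξd : Differentiable ℝ ξ := hξ.differentiable (by simp)
  have hξ'c : Continuous (deriv ξ) := hξ.continuous_deriv (by simp)
  -- boundary values vanish
  have hcl : IsClosed {x : ℝ | ξ x = 0} := isClosed_eq hξc continuous_const
  have hξa : ξ a = 0 := by
    have hsub : Iio a ⊆ {x | ξ x = 0} := by
      intro x hx
      by_contra h
      have : x ∈ tsupport ξ := subset_tsupport ξ (by simpa [Function.mem_support] using h)
      exact absurd (csInf_le hKc.bddBelow this) (not_le.2 hx)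
    have : a ∈ closure {x : ℝ | ξ x = 0} := by
      apply closure_mono hsub
      rw [closure_Iio]
      exact self_mem_Iic
    rwa [hcl.closure_eq] at this
  have hξb : ξ b = 0 := by
    have hsub : Ioi b ⊆ {x | ξ x = 0} := by
      intro x hx
      by_contra h
      have : x ∈ tsupport ξ := subset_tsupport ξ (by simpa [Function.mem_support] using h)
      exact absurd (le_csSup hKc.bddAbove this) (not_le.2 hx)
    have : b ∈ closure {x : ℝ | ξ x = 0} := by
      apply closure_mono hsub
      rw [closure_Ioi]
      exact self_mem_Ici
    rwa [hcl.closure_eq] at this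
  -- vanishing off the support
  have hvan : ∀ t, t ∉ tsupport ξ → ξ t = 0 ∧ deriv ξ t = 0 := by
    intro t ht
    refine ⟨image_eq_zero_of_notMem_tsupport ht, ?_⟩
    by_contra h
    exact ht (support_deriv_subset (by simpa [Function.mem_support] using h))
  -- reduce set integrals to interval integrals
  have hEq : ∀ f : ℝ → ℝ, (∀ t, t ∉ tsupport ξ → f t = 0) →
      ∫ t in S, f t = ∫ t in a..b, f t := by
    intro f hf
    rw [intervalIntegral.integral_of_le hab, ← integral_Icc_eq_integral_Ioc]
    rw [setIntegral_eq_integral_of_forall_compl_eq_zero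
      (fun x hx => hf x (fun h => hx (hξin h)))]
    rw [← setIntegral_eq_integral_of_forall_compl_eq_zero
      (s := Icc a b) (fun x hx => hf x (fun h => hx (hKsub h)))]
  rw [hEq _ (fun t ht => by simp [(hvan t ht).1]),
      hEq _ (fun t ht => by simp [(hvan t ht).2])]
  -- continuity facts on the interval
  have hu : uIcc a b = Icc a b := uIcc_of_le hab
  have hΦc : ContinuousOn Φ (Icc a b) := fun t ht =>
    (hΦ t (hIccS ht)).continuousAt.continuousWithinAt
  have hΦ'c : ContinuousOn Φ' (Icc a b) := hΦ'cont.mono hIccS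
  have hC1 : ContinuousOn (fun t => Φ' t * ξ t ^ 2) (uIcc a b) := by
    rw [hu]; exact hΦ'c.mul ((hξc.continuousOn).pow 2)
  have hC2 : ContinuousOn (fun t => 4 * Φ t ^ 2 / Φ' t * (deriv ξ t) ^ 2) (uIcc a b) := by
    rw [hu]
    exact ((continuousOn_const.mul (hΦc.pow 2)).div hΦ'c
      (fun t ht => (hΦ'pos t (hIccS ht)).ne')).mul ((hξ'c.continuousOn).pow 2)
  have hC3 : ContinuousOn (fun t => Φ t * (2 * ξ t * deriv ξ t)) (uIcc a b) := by
    rw [hu]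
    exact hΦc.mul ((continuousOn_const.mul hξc.continuousOn).mul hξ'c.continuousOn)
  have hint1 := hC1.intervalIntegrable (μ := volume)
  have hint2 := hC2.intervalIntegrable (μ := volume)
  have hint3 := hC3.intervalIntegrable (μ := volume)
  -- integration by parts
  have hder : ∀ t ∈ uIcc a b, HasDerivAt (fun t => Φ t * ξ t ^ 2)
      (Φ' t * ξ t ^ 2 + Φ t * (2 * ξ t * deriv ξ t)) t := by
    intro t ht
    rw [hu] at ht
    have h1 : HasDerivAt ξ (deriv ξ t) t := (hξd t).hasDerivAt
    have h2 : HasDerivAt (fun t => ξ t ^ 2) (2 * ξ t * deriv ξ t) t := by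
      simpa using h1.fun_pow 2
    exact (hΦ t (hIccS ht)).mul h2
  have hibp : (∫ t in a..b, (Φ' t * ξ t ^ 2 + Φ t * (2 * ξ t * deriv ξ t))) = 0 := by
    rw [intervalIntegral.integral_eq_sub_of_hasDerivAt hder ((hC1.add hC3).intervalIntegrable (μ := volume))]
    simp [hξa, hξb]
  have hsplit : (∫ t in a..b, Φ' t * ξ t ^ 2)
      = ∫ t in a..b, -(Φ t * (2 * ξ t * deriv ξ t)) := by
    rw [intervalIntegral.integral_neg]
    have hadd := intervalIntegral.integral_add hint1 hint3
    rw [hibp] at hadd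
    linarith
  -- pointwise AM-GM bound
  have hptwise : ∀ t ∈ Icc a b, -(Φ t * (2 * ξ t * deriv ξ t)) ≤
      1/2 * (Φ' t * ξ t ^ 2) + 1/2 * (4 * Φ t ^ 2 / Φ' t * (deriv ξ t) ^ 2) := by
    intro t ht
    have hc : 0 < Φ' t := hΦ'pos t (hIccS ht)
    have key : 4 * Φ t ^ 2 / Φ' t * (deriv ξ t) ^ 2 * Φ' t = (2 * Φ t * deriv ξ t) ^ 2 := by
      field_simp; ring
    nlinarith [sq_nonneg (Φ' t * ξ t + 2 * Φ t * deriv ξ t), hc, key,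
      sq_nonneg (ξ t), sq_nonneg (deriv ξ t)]
  have hintrhs : IntervalIntegrable
      (fun t => 1/2 * (Φ' t * ξ t ^ 2) + 1/2 * (4 * Φ t ^ 2 / Φ' t * (deriv ξ t) ^ 2))
      volume a b :=
    ((continuousOn_const.mul hC1).add (continuousOn_const.mul hC2)).intervalIntegrable
  have hmono := intervalIntegral.integral_mono_on hab hint3.neg hintrhs hptwise
  rw [intervalIntegral.integral_add (f := fun t => 1/2 * (Φ' t * ξ t ^ 2))
    (g := fun t => 1/2 * (4 * Φ t ^ 2 / Φ' t * (deriv ξ t) ^ 2))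
    ((continuousOn_const.mul hC1).intervalIntegrable)
    ((continuousOn_const.mul hC2).intervalIntegrable),
    intervalIntegral.integral_const_mul, intervalIntegral.integral_const_mul] at hmono
  simp only [Pi.neg_apply] at hmono
  linarith [hsplit, hmono]
end

section
/- Let N ≥ 2 and u be C² on (0,1] with u_r < 0 solving −u_rr − ((N−1)/r) u_r = g(u) with g nonnegative and nondecreasing. Then r ↦ |u_r(r)|/r is nonincreasing on (0,1]. -/
/-!
Write `v = u_r`. The equation says that the flux `r^{N-1} v` has derivative `-r^{N-1} g(u)`.
Since `u` is decreasing and `g` nondecreasing, `g(u(s)) ≥ g(u(r))` for `s ≤ r`; comparing the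
flux at `r` with its (nonpositive) values near `0` gives `r^{N-1} v(r) ≤ -g(u(r)) r^N / N`, i.e.
`N v + r g(u) ≤ 0`. By the equation this is exactly the numerator of `(-v/r)' = (-v' r + v)/r²`.
-/

open Set Filter Topology

lemma antitoneOn_Ioc_of_hasDerivWithinAt_nonpos {f f' : ℝ → ℝ} {a b : ℝ}
    (hf : ∀ x ∈ Ioc a b, HasDerivWithinAt f (f' x) (Ioc a b) x)
    (hf' : ∀ x ∈ Ioo a b, f' x ≤ 0) : AntitoneOn f (Ioc a b) :=
  antitoneOn_of_hasDerivWithinAt_nonpos (convex_Ioc a b)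
    (fun x hx => (hf x hx).continuousWithinAt)
    (fun x hx => by
      rw [interior_Ioc] at hx ⊢
      exact (hf x (Ioo_subset_Ioc_self hx)).mono Ioo_subset_Ioc_self)
    (fun x hx => hf' x (by rwa [interior_Ioc] at hx))

lemma HasDerivWithinAt.pow_pred_mul {N : ℕ} (hN : N ≠ 0) {v : ℝ → ℝ} {v' r : ℝ} {s : Set ℝ}
    (hr : r ≠ 0) (hv : HasDerivWithinAt v v' s r) :
    HasDerivWithinAt (fun x => x ^ (N - 1) * v x)
      (r ^ (N - 1) * (v' + ((N : ℝ) - 1) / r * v r)) s r := by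
  refine ((hasDerivAt_pow (N - 1) r).hasDerivWithinAt.mul hv).congr_deriv ?_
  obtain ⟨n, rfl⟩ := Nat.exists_eq_succ_of_ne_zero hN
  rcases n with _ | n
  · simp
  · simp only [Nat.succ_sub_one, pow_succ]
    push_cast
    field_simp
    ring

lemma add_mul_pow_div_nonpos_of_hasDerivWithinAt {f f' : ℝ → ℝ} {N : ℕ} (hN : N ≠ 0)
    {c b : ℝ} (hb : 0 < b)
    (hf : ∀ x ∈ Ioc 0 b, HasDerivWithinAt f (f' x) (Ioc 0 b) x)
    (hf_nonpos : ∀ x ∈ Ioc 0 b, f x ≤ 0)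
    (hf' : ∀ x ∈ Ioo 0 b, f' x + c * x ^ (N - 1) ≤ 0) :
    f b + c * b ^ N / N ≤ 0 := by
  set w : ℝ → ℝ := fun x => f x + c * x ^ N / N
  have hw : AntitoneOn w (Ioc 0 b) := by
    refine antitoneOn_Ioc_of_hasDerivWithinAt_nonpos (f' := fun x => f' x + c * x ^ (N - 1))
      (fun x hx => ?_) hf'
    refine ((hf x hx).add (((hasDerivAt_pow N x).hasDerivWithinAt.const_mul c).div_const
      (N : ℝ))).congr_deriv ?_
    have hN' : (N : ℝ) ≠ 0 := Nat.cast_ne_zero.2 hN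
    field_simp
  have hlim : Tendsto (fun ε : ℝ => c * ε ^ N / N) (𝓝[>] 0) (𝓝 0) := by
    have : Continuous fun ε : ℝ => c * ε ^ N / N := by fun_prop
    exact (this.tendsto' 0 0 (by simp [zero_pow hN])).mono_left nhdsWithin_le_nhds
  refine ge_of_tendsto hlim ?_
  filter_upwards [Ioc_mem_nhdsGT hb] with ε hε
  calc w b ≤ w ε := hw hε (right_mem_Ioc.2 hb) hε.2
    _ ≤ c * ε ^ N / N := by simp only [w]; linarith [hf_nonpos ε hε]

lemma natCast_mul_deriv_add_mul_nonpos {N : ℕ} (hN : N ≠ 0) {u u' u'' g : ℝ → ℝ}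
    (hgmono : Monotone g) (hu_anti : AntitoneOn u (Ioc 0 1))
    (hu' : ∀ r ∈ Ioc (0 : ℝ) 1, HasDerivWithinAt u' (u'' r) (Ioc 0 1) r)
    (hu'neg : ∀ r ∈ Ioc (0 : ℝ) 1, u' r < 0)
    (heq : ∀ r ∈ Ioc (0 : ℝ) 1, -u'' r - ((N : ℝ) - 1) / r * u' r = g (u r))
    {r : ℝ} (hr : r ∈ Ioc (0 : ℝ) 1) :
    (N : ℝ) * u' r + r * g (u r) ≤ 0 := by
  have hsub : Ioc 0 r ⊆ Ioc (0 : ℝ) 1 := Ioc_subset_Ioc_right hr.2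
  have hflux := add_mul_pow_div_nonpos_of_hasDerivWithinAt hN hr.1 (c := g (u r))
    (f := fun x => x ^ (N - 1) * u' x) (f' := fun x => -(x ^ (N - 1) * g (u x)))
    (fun x hx => by
      have hode : u'' x + ((N : ℝ) - 1) / x * u' x = -g (u x) := by linarith [heq x (hsub hx)]
      convert ((hu' x (hsub hx)).mono hsub).pow_pred_mul hN hx.1.ne' using 1
      rw [hode, mul_neg])
    (fun x hx => mul_nonpos_of_nonneg_of_nonpos (pow_nonneg hx.1.le _) (hu'neg x (hsub hx)).le)
    (fun x hx => by
      have hg : g (u r) ≤ g (u x) := hgmono (hu_anti (hsub (Ioo_subset_Ioc_self hx)) hr hx.2.le)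
      nlinarith [pow_nonneg hx.1.le (N - 1)])
  have hpow : r ^ N = r ^ (N - 1) * r := by rw [← pow_succ, Nat.sub_add_cancel (by omega)]
  have hpos : 0 < r ^ (N - 1) / N := by have := hr.1; positivity
  have : r ^ (N - 1) / N * ((N : ℝ) * u' r + r * g (u r)) ≤ 0 := by
    convert hflux using 1
    rw [hpow]
    field_simp
  exact nonpos_of_mul_nonpos_right this hpos

theorem urOverR_antitone_general (N : ℕ) (hN : 2 ≤ N) (u u' u'' : ℝ → ℝ) (g : ℝ → ℝ)
    (hgmono : Monotone g)
    (hu : ∀ r ∈ Set.Ioc (0 : ℝ) 1, HasDerivWithinAt u (u' r) (Set.Ioc (0 : ℝ) 1) r)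
    (hu' : ∀ r ∈ Set.Ioc (0 : ℝ) 1, HasDerivWithinAt u' (u'' r) (Set.Ioc (0 : ℝ) 1) r)
    (hu'neg : ∀ r ∈ Set.Ioc (0 : ℝ) 1, u' r < 0)
    (heq : ∀ r ∈ Set.Ioc (0 : ℝ) 1, -u'' r - ((N : ℝ) - 1) / r * u' r = g (u r)) :
    AntitoneOn (fun r => |u' r| / r) (Set.Ioc (0 : ℝ) 1) := by
  have hN0 : N ≠ 0 := by omega
  have hu_anti : AntitoneOn u (Ioc 0 1) :=
    antitoneOn_Ioc_of_hasDerivWithinAt_nonpos hu fun r hr => (hu'neg r (Ioo_subset_Ioc_self hr)).le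
  have hquot : AntitoneOn (fun r => -u' r / r) (Ioc 0 1) := by
    refine antitoneOn_Ioc_of_hasDerivWithinAt_nonpos
      (fun r hr => (hu' r hr).neg.div (hasDerivWithinAt_id r _) hr.1.ne') fun r hr => ?_
    have hr' : r ∈ Ioc (0 : ℝ) 1 := Ioo_subset_Ioc_self hr
    have hnum : -u'' r * r - -u' r * 1 = N * u' r + r * g (u r) := by
      have hr0 : r ≠ 0 := hr.1.ne'
      rw [← heq r hr']
      field_simp
      ring
    rw [Pi.neg_apply, hnum]
    exact div_nonpos_of_nonpos_of_nonneg
      (natCast_mul_deriv_add_mul_nonpos hN0 hgmono hu_anti hu' hu'neg heq hr') (sq_nonneg r)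
  refine hquot.congr fun r hr => ?_
  simp only [abs_of_neg (hu'neg r hr)]

/-- For a radially decreasing solution of `−u_rr − ((N−1)/r) u_r = g(u)` with `g ≥ 0`
continuous and nondecreasing, the function `r ↦ |u_r(r)|/r` is nonincreasing on `(0,1]`. -/
theorem urOverR_antitone (N : ℕ) (hN : 2 ≤ N) (u u' u'' : ℝ → ℝ) (g : ℝ → ℝ)
    (hgcont : Continuous g) (hgpos : ∀ s, 0 ≤ g s) (hgmono : Monotone g)
    (hu : ∀ r ∈ Set.Ioc (0 : ℝ) 1, HasDerivWithinAt u (u' r) (Set.Ioc (0 : ℝ) 1) r)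
    (hu' : ∀ r ∈ Set.Ioc (0 : ℝ) 1, HasDerivWithinAt u' (u'' r) (Set.Ioc (0 : ℝ) 1) r)
    (hu'neg : ∀ r ∈ Set.Ioc (0 : ℝ) 1, u' r < 0)
    (heq : ∀ r ∈ Set.Ioc (0 : ℝ) 1, -u'' r - ((N : ℝ) - 1) / r * u' r = g (u r)) :
    AntitoneOn (fun r => |u' r| / r) (Set.Ioc (0 : ℝ) 1) :=
  urOverR_antitone_general N hN u u' u'' g hgmono hu hu' hu'neg heq
end

section
/- Let N ≥ 2 and suppose u_r : (0,1] → ℝ is continuous, u_r < 0, t ↦ t^{2N−2} u_r(t)² is nondecreasing, and ∫₀^{r} t^{N−1} u_r(t)² dt ≤ K r^{2√(N−1)+2} for all r ∈ (0,1] and some K > 0. Then there is a constant M depending only on N and K such that |u_r(r)| ≤ M r^{−N/2+√(N−1)+1} for all r ∈ (0,1/2]. -/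
/-!
Monotonicity of `t ^ (2N-2) * u_r t ^ 2` bounds the integrand `t ^ (N-1) * u_r t ^ 2` on `[r, 2r]`
from below by `r ^ (2N-2) * u_r r ^ 2 / (2r) ^ (N-1)`, so `r ^ N * u_r r ^ 2 / 2 ^ (N-1)` is at
most `∫₀^{2r} t ^ (N-1) * u_r t ^ 2 ≤ K (2r) ^ (2√(N-1)+2)`. Solving for `|u_r r|` gives the estimate.
-/

open MeasureTheory Set intervalIntegral

lemma div_pow_le_pow_mul_of_pow_two_mul_mul_le {k : ℕ} {r t a b : ℝ} (hr : 0 < r) (hrt : r ≤ t)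
    (ht : t ≤ 2 * r) (ha : 0 ≤ a) (hab : r ^ (2 * k) * a ≤ t ^ (2 * k) * b) :
    r ^ (2 * k) * a / (2 * r) ^ k ≤ t ^ k * b := by
  have ht0 : 0 < t := hr.trans_le hrt
  have hb : 0 ≤ t ^ k * b := by
    have : 0 ≤ t ^ k * (t ^ k * b) := by
      rw [← mul_assoc, ← pow_add, ← two_mul]
      exact (by positivity : 0 ≤ r ^ (2 * k) * a).trans hab
    exact nonneg_of_mul_nonneg_right this (by positivity)
  rw [div_le_iff₀ (by positivity)]
  calc r ^ (2 * k) * a ≤ t ^ (2 * k) * b := hab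
    _ = t ^ k * b * t ^ k := by rw [two_mul, pow_add]; ring
    _ ≤ t ^ k * b * (2 * r) ^ k := by gcongr

lemma pow_succ_mul_div_le_integral_of_monotoneOn {k : ℕ} {v : ℝ → ℝ} {r : ℝ} (hr : 0 < r)
    (hv : 0 ≤ v r) (hmono : MonotoneOn (fun t => t ^ (2 * k) * v t) (Icc r (2 * r)))
    (hint : IntervalIntegrable (fun t => t ^ k * v t) volume r (2 * r)) :
    r ^ (k + 1) * v r / 2 ^ k ≤ ∫ t in r..2 * r, t ^ k * v t := by
  have hr2 : r ≤ 2 * r := by linarith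
  have hpoint : ∀ t ∈ Icc r (2 * r), r ^ (2 * k) * v r / (2 * r) ^ k ≤ t ^ k * v t :=
    fun t ht => div_pow_le_pow_mul_of_pow_two_mul_mul_le hr ht.1 ht.2 hv
      (hmono (left_mem_Icc.mpr hr2) ht ht.1)
  have hconst : ∫ _ in r..2 * r, r ^ (2 * k) * v r / (2 * r) ^ k = r ^ (k + 1) * v r / 2 ^ k := by
    rw [intervalIntegral.integral_const, smul_eq_mul, mul_pow, two_mul k, pow_add]
    field_simp
    ring
  exact hconst ▸ integral_mono_on hr2 intervalIntegrable_const hint hpoint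

lemma abs_le_sqrt_mul_rpow_of_sq_mul_pow_le {a r C p : ℝ} {n : ℕ} (hr : 0 < r) (hC : 0 ≤ C)
    (h : a ^ 2 * r ^ n ≤ C * r ^ p) : |a| ≤ √C * r ^ ((p - n) / 2) := by
  have hsq : a ^ 2 ≤ C * r ^ (p - n) := by
    rw [Real.rpow_sub_natCast hr.ne', ← mul_div_assoc, le_div_iff₀ (by positivity)]
    exact h
  calc |a| = √(a ^ 2) := (Real.sqrt_sq_eq_abs a).symm
    _ ≤ √(C * r ^ (p - n)) := Real.sqrt_le_sqrt hsq
    _ = √C * r ^ ((p - n) / 2) := by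
      rw [Real.sqrt_mul hC, Real.sqrt_eq_rpow (r ^ _), ← Real.rpow_mul hr.le, mul_one_div]

/-- First-derivative estimate: if `u_r < 0`, `t^{2N−2} u_r²` is nondecreasing, and
`∫₀^r t^{N−1} u_r² ≤ K r^{2√(N−1)+2}`, then `|u_r(r)| ≤ M r^{−N/2+√(N−1)+1}` on `(0,1/2]`
for a constant `M` depending only on `N` and `K`. -/
theorem first_derivative_estimate (N : ℕ) (hN : 2 ≤ N) (K : ℝ) (hK : 0 < K) :
    ∃ M : ℝ, 0 < M ∧
      ∀ u_r : ℝ → ℝ,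
        ContinuousOn u_r (Set.Ioc (0 : ℝ) 1) →
        (∀ r ∈ Set.Ioc (0 : ℝ) 1, u_r r < 0) →
        MonotoneOn (fun t => t ^ (2 * N - 2) * u_r t ^ 2) (Set.Ioc (0 : ℝ) 1) →
        IntegrableOn (fun t => t ^ (N - 1) * u_r t ^ 2) (Set.Ioo (0 : ℝ) 1) →
        (∀ r ∈ Set.Ioc (0 : ℝ) 1,
          ∫ t in (0 : ℝ)..r, t ^ (N - 1) * u_r t ^ 2 ≤
            K * r ^ (2 * Real.sqrt ((N : ℝ) - 1) + 2)) →
        ∀ r ∈ Set.Ioc (0 : ℝ) (1 / 2),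
          |u_r r| ≤ M * r ^ (-(N : ℝ) / 2 + Real.sqrt ((N : ℝ) - 1) + 1) := by
  set s := √((N : ℝ) - 1)
  refine ⟨√(2 ^ (N - 1) * K * 2 ^ (2 * s + 2)), by positivity, ?_⟩
  intro u _ _ hmono hint hbound r ⟨hr, hr2⟩
  have hint' : IntervalIntegrable (fun t => t ^ (N - 1) * u t ^ 2) volume 0 (2 * r) :=
    (intervalIntegrable_iff_integrableOn_Ioc_of_le (by linarith)).mpr
      (((integrableOn_Ioc_iff_integrableOn_Ioo).mpr hint).mono_set (Ioc_subset_Ioc_right (by linarith)))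
  have hmono' : MonotoneOn (fun t => t ^ (2 * (N - 1)) * u t ^ 2) (Icc r (2 * r)) := by
    rw [Nat.mul_sub_one]
    exact hmono.mono fun t ht => ⟨hr.trans_le ht.1, by linarith [ht.2]⟩
  have hlower := pow_succ_mul_div_le_integral_of_monotoneOn hr (sq_nonneg (u r)) hmono'
    (hint'.mono_set (by rw [uIcc_of_le (by linarith), uIcc_of_le (by linarith)]; gcongr))
  have hupper := (integral_mono_interval hr.le (by linarith) le_rfl
    (ae_restrict_of_forall_mem measurableSet_Ioc fun t ht => by have := ht.1; positivity) hint').trans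
    (hbound (2 * r) ⟨by linarith, by linarith⟩)
  rw [Nat.sub_add_cancel (by omega), div_le_iff₀ (by positivity)] at hlower
  have hcomb : u r ^ 2 * r ^ N ≤ 2 ^ (N - 1) * K * 2 ^ (2 * s + 2) * r ^ (2 * s + 2) := by
    rw [Real.mul_rpow zero_le_two hr.le] at hupper
    nlinarith [pow_pos (two_pos : (0 : ℝ) < 2) (N - 1)]
  convert abs_le_sqrt_mul_rpow_of_sq_mul_pow_le hr (by positivity) hcomb using 3
  ring
end

section
/- Let N ≥ 10 and let h ∈ C²((0,1]) ∩ L¹((0,1)) be nonnegative. Define Φ(r) = r^{2√(N−1)}(1 + ∫₀^r h) and define u_r(r) < 0 by Φ'(r) = (N−1) r^{N−3} u_r(r)². Then |u_r(r)| ≥ √2 (N−1)^{−1/4} r^{−N/2+√(N−1)+1} for all r ∈ (0,1], and since N ≥ 10 implies −N/2+√(N−1)+1 ≤ −1, the function u_r is not integrable on (0,1). -/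
/-!
Since the integrand is nonnegative, `Φ r - r ^ (2√(N-1)) = r ^ (2√(N-1)) ∫₀ʳ h` is monotone, so
`Φ' r ≥ 2√(N-1) r ^ (2√(N-1) - 1)`. Dividing by `(N-1) r ^ (N-3)` and taking square roots gives
the pointwise bound on `|u_r|`, a power of `r` with exponent `≤ -1` once `N ≥ 10`, which is not
integrable at `0`.
-/

open MeasureTheory Set intervalIntegral Filter

theorem neg_half_add_sqrt_sub_one_add_one_le {x : ℝ} (hx : 10 ≤ x) :
    -x / 2 + √(x - 1) + 1 ≤ -1 := by
  have : √(x - 1) ≤ x / 2 - 2 :=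
    Real.sqrt_le_iff.mpr ⟨by linarith, by nlinarith⟩
  linarith

theorem monotoneOn_integral_of_nonneg {f : ℝ → ℝ} {a b : ℝ} (hf : IntegrableOn f (Ioo a b))
    (hf₀ : ∀ x ∈ Ioc a b, 0 ≤ f x) : MonotoneOn (fun x ↦ ∫ t in a..x, f t) (Icc a b) := by
  intro x hx y hy hxy
  refine integral_mono_interval le_rfl hx.1 hxy ?_ ?_
  · filter_upwards [ae_restrict_mem measurableSet_Ioc] with t ht
    exact hf₀ t ⟨ht.1, ht.2.trans hy.2⟩
  · rw [intervalIntegrable_iff_integrableOn_Ioo_of_le hy.1]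
    exact hf.mono_set (Ioo_subset_Ioo_right hy.2)

theorem mul_rpow_sub_one_le_of_hasDerivWithinAt {Φ I : ℝ → ℝ} {s : Set ℝ} {a r Φ' : ℝ}
    (hs : s ⊆ Ioi 0) (ha : 0 ≤ a) (hI : MonotoneOn I s) (hI₀ : ∀ x ∈ s, 0 ≤ I x)
    (hΦ : ∀ x ∈ s, Φ x = x ^ a * (1 + I x)) (hr : r ∈ s) (hacc : AccPt r (𝓟 s))
    (hd : HasDerivWithinAt Φ Φ' s r) : a * r ^ (a - 1) ≤ Φ' := by
  have hmono : MonotoneOn (fun x ↦ Φ x - x ^ a) s := by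
    intro x hx y hy hxy
    simp only [hΦ x hx, hΦ y hy, mul_one_add, add_sub_cancel_left]
    exact mul_le_mul (Real.rpow_le_rpow (hs hx).le hxy ha) (hI hx hy hxy) (hI₀ x hx)
      (Real.rpow_nonneg (hs hy).le a)
  have hd' := hd.sub (Real.hasDerivAt_rpow_const (p := a) (Or.inl (hs hr).ne')).hasDerivWithinAt
  linarith [hd'.nonneg_of_monotoneOn hacc hmono]

theorem mul_rpow_le_abs_of_two_sqrt_mul_rpow_le {m r p u : ℝ} (hm : 0 < m) (hr : 0 < r)
    (h : 2 * √m * r ^ (2 * √m - 1) ≤ m * r ^ p * u ^ 2) :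
    √2 * m ^ (-(1 : ℝ) / 4) * r ^ ((2 * √m - 1 - p) / 2) ≤ |u| := by
  set q := 2 * √m - 1 - p
  have hsm : 0 < √m := Real.sqrt_pos.mpr hm
  have hu : 2 / √m * r ^ q ≤ u ^ 2 := by
    have hsplit : r ^ (2 * √m - 1) = r ^ q * r ^ p := by
      rw [← Real.rpow_add hr]; congr 1; ring
    have hmul : √m * r ^ p * (2 * r ^ q) ≤ √m * r ^ p * (√m * u ^ 2) := by
      rw [hsplit] at h
      linear_combination h - r ^ p * u ^ 2 * Real.mul_self_sqrt hm.le
    rw [div_mul_eq_mul_div, div_le_iff₀ hsm, mul_comm _ √m]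
    exact le_of_mul_le_mul_left hmul (by positivity)
  have hsq : (√2 * m ^ (-(1 : ℝ) / 4) * r ^ (q / 2)) ^ 2 = 2 / √m * r ^ q := by
    have hm4 : (m ^ (-(1 : ℝ) / 4)) ^ 2 = (√m)⁻¹ := by
      rw [← Real.rpow_mul_natCast hm.le, Real.sqrt_eq_rpow, ← Real.rpow_neg hm.le]
      norm_num
    have hr2 : (r ^ (q / 2)) ^ 2 = r ^ q := by
      rw [← Real.rpow_mul_natCast hr.le]
      norm_num
    rw [mul_pow, mul_pow, Real.sq_sqrt zero_le_two, hm4, hr2, div_eq_mul_inv]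
  rw [← abs_of_nonneg (by positivity : 0 ≤ √2 * m ^ (-(1 : ℝ) / 4) * r ^ (q / 2)), ← sq_le_sq, hsq]
  exact hu

theorem not_integrableOn_Ioo_of_mul_rpow_le_abs {u : ℝ → ℝ} {c e t : ℝ} (hc : 0 < c)
    (he : e ≤ -1) (ht : 0 < t) (hu : ∀ x ∈ Ioo 0 t, c * x ^ e ≤ |u x|) :
    ¬ IntegrableOn u (Ioo 0 t) := by
  intro hint
  have hpow : IntegrableOn (fun x ↦ c * x ^ e) (Ioo 0 t) := by
    refine Integrable.mono hint (by fun_prop) ?_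
    filter_upwards [ae_restrict_mem measurableSet_Ioo] with x hx
    rw [Real.norm_of_nonneg (by have := hx.1; positivity), Real.norm_eq_abs]
    exact hu x hx
  have hrpow := hpow.const_mul c⁻¹
  simp only [inv_mul_cancel_left₀ hc.ne'] at hrpow
  linarith [(integrableOn_Ioo_rpow_iff ht).mp hrpow]

theorem ur_lower_bound_not_integrable_general (N : ℕ) (hN : 10 ≤ N) (h : ℝ → ℝ)
    (hL1 : IntegrableOn h (Set.Ioo (0 : ℝ) 1))
    (hpos : ∀ s ∈ Set.Ioc (0 : ℝ) 1, 0 ≤ h s)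
    (Φ Φ' : ℝ → ℝ)
    (hΦ : ∀ r ∈ Set.Ioc (0 : ℝ) 1,
      Φ r = r ^ (2 * Real.sqrt ((N : ℝ) - 1)) * (1 + ∫ s in (0 : ℝ)..r, h s))
    (hΦ' : ∀ r ∈ Set.Ioc (0 : ℝ) 1, HasDerivWithinAt Φ (Φ' r) (Set.Ioc (0 : ℝ) 1) r)
    (u_r : ℝ → ℝ)
    (hu_rdef : ∀ r ∈ Set.Ioc (0 : ℝ) 1, Φ' r = ((N : ℝ) - 1) * r ^ (N - 3) * u_r r ^ 2) :
    (∀ r ∈ Set.Ioc (0 : ℝ) 1,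
        Real.sqrt 2 * ((N : ℝ) - 1) ^ (-(1 : ℝ) / 4) *
          r ^ (-(N : ℝ) / 2 + Real.sqrt ((N : ℝ) - 1) + 1) ≤ |u_r r|) ∧
      (-(N : ℝ) / 2 + Real.sqrt ((N : ℝ) - 1) + 1 ≤ -1) ∧
      ¬ IntegrableOn u_r (Set.Ioo (0 : ℝ) 1) := by
  have hN' : (10 : ℝ) ≤ N := by exact_mod_cast hN
  have hm : (0 : ℝ) < N - 1 := by linarith
  have hI := monotoneOn_integral_of_nonneg hL1 hpos
  have hI₀ : ∀ x ∈ Ioc (0 : ℝ) 1, 0 ≤ ∫ t in (0 : ℝ)..x, h t := fun x hx ↦ by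
    simpa using hI (left_mem_Icc.2 zero_le_one) (Ioc_subset_Icc_self hx) hx.1.le
  have hbound : ∀ r ∈ Ioc (0 : ℝ) 1, √2 * ((N : ℝ) - 1) ^ (-(1 : ℝ) / 4) *
      r ^ (-(N : ℝ) / 2 + √((N : ℝ) - 1) + 1) ≤ |u_r r| := by
    intro r hr
    have hΦ'r := mul_rpow_sub_one_le_of_hasDerivWithinAt (fun x hx ↦ hx.1) (by positivity)
      (hI.mono Ioc_subset_Icc_self) hI₀ hΦ hr (uniqueDiffOn_Ioc 0 1 r hr).accPt (hΦ' r hr)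
    rw [hu_rdef r hr, ← Real.rpow_natCast, Nat.cast_sub (by omega : 3 ≤ N)] at hΦ'r
    convert mul_rpow_le_abs_of_two_sqrt_mul_rpow_le hm hr.1 hΦ'r using 3
    push_cast
    ring
  have hexp := neg_half_add_sqrt_sub_one_add_one_le hN'
  exact ⟨hbound, hexp, not_integrableOn_Ioo_of_mul_rpow_le_abs (by positivity) hexp one_pos
    fun r hr ↦ hbound r (Ioo_subset_Ioc_self hr)⟩

/-- In the family construction, `|u_r(r)| ≥ √2 (N−1)^{−1/4} r^{−N/2+√(N−1)+1}`, the
exponent `−N/2+√(N−1)+1` is `≤ −1` for `N ≥ 10`, and `u_r` is not integrable on `(0,1)`. -/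
theorem ur_lower_bound_not_integrable (N : ℕ) (hN : 10 ≤ N) (h : ℝ → ℝ)
    (hC2 : ContDiffOn ℝ 2 h (Set.Ioc (0 : ℝ) 1))
    (hL1 : IntegrableOn h (Set.Ioo (0 : ℝ) 1))
    (hpos : ∀ s ∈ Set.Ioc (0 : ℝ) 1, 0 ≤ h s)
    (Φ Φ' : ℝ → ℝ)
    (hΦ : ∀ r ∈ Set.Ioc (0 : ℝ) 1,
      Φ r = r ^ (2 * Real.sqrt ((N : ℝ) - 1)) * (1 + ∫ s in (0 : ℝ)..r, h s))
    (hΦ' : ∀ r ∈ Set.Ioc (0 : ℝ) 1, HasDerivWithinAt Φ (Φ' r) (Set.Ioc (0 : ℝ) 1) r)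
    (u_r : ℝ → ℝ)
    (hu_rneg : ∀ r ∈ Set.Ioc (0 : ℝ) 1, u_r r < 0)
    (hu_rdef : ∀ r ∈ Set.Ioc (0 : ℝ) 1, Φ' r = ((N : ℝ) - 1) * r ^ (N - 3) * u_r r ^ 2) :
    (∀ r ∈ Set.Ioc (0 : ℝ) 1,
        Real.sqrt 2 * ((N : ℝ) - 1) ^ (-(1 : ℝ) / 4) *
          r ^ (-(N : ℝ) / 2 + Real.sqrt ((N : ℝ) - 1) + 1) ≤ |u_r r|) ∧
      (-(N : ℝ) / 2 + Real.sqrt ((N : ℝ) - 1) + 1 ≤ -1) ∧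
      ¬ IntegrableOn u_r (Set.Ioo (0 : ℝ) 1) :=
  ur_lower_bound_not_integrable_general N hN h hL1 hpos Φ Φ' hΦ hΦ' u_r hu_rdef
end

section
/- Let N ≥ 10 and let h ∈ C²((0,1]) with 0 ≤ h' (h increasing) and 0 ≤ h ≤ 1 on (0,1]. Define Φ(r) = r^{2√(N−1)}(1 + ∫₀^r h) and u_r < 0 by Φ' = (N−1) r^{N−3} u_r². Then Φ'' > 0 on (0,1], the function r ↦ r^{2N−2} u_r(r)² is increasing, and |u_r(r)| ≤ D_N r^{−N/2+√(N−1)+1} for all r ∈ (0,1], where D_N depends only on N. -/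
open MeasureTheory Set intervalIntegral Topology

/-!
Write `a = 2√(N-1)` and `g(r) = ∫₀^r h`. Differentiating `Φ = r^a (1 + g)` twice gives
`Φ' = a r^(a-1) (1 + g) + r^a h` and `Φ'' = a (a-1) r^(a-2) (1 + g) + 2a r^(a-1) h + r^a h'`,
a sum of nonnegative terms whose first one is positive because `a > 1`. So `Φ'` is strictly
increasing, and since `Φ' = (N-1) r^(N-3) u_r² ≥ 0`, so is `r^(N+1) Φ' = (N-1) r^(2N-2) u_r²`.
Finally `g ≤ r ≤ 1` and `h ≤ 1` give `Φ' ≤ (2a+1) r^(a-1)`, which, solved for `u_r`, is the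
pointwise bound with `D_N = √((2a+1)/(N-1))`.
-/

lemma hasDerivWithinAt_integral_Ioc {f : ℝ → ℝ} {a b r : ℝ} (hf : ContinuousOn f (Ioc a b))
    (hint : IntegrableOn f (Ioc a b)) (hr : r ∈ Ioc a b) :
    HasDerivWithinAt (fun x => ∫ s in a..x, f s) (f r) (Ioc a b) r := by
  have hmem : Ioc a b ∈ 𝓝[Icc a b] r :=
    mem_nhdsWithin.2 ⟨Ioi a, isOpen_Ioi, hr.1, fun x hx => ⟨hx.1, hx.2.2⟩⟩
  have : Fact (r ∈ Icc a b) := ⟨Ioc_subset_Icc_self hr⟩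
  have hint_r : IntervalIntegrable f volume a r :=
    (intervalIntegrable_iff_integrableOn_Ioc_of_le hr.1.le).2
      (hint.mono_set (Ioc_subset_Ioc_right hr.2))
  exact (integral_hasDerivWithinAt_right hint_r
    ⟨_, hmem, hf.aestronglyMeasurable measurableSet_Ioc⟩
    ((hf r hr).mono_of_mem_nhdsWithin hmem)).mono Ioc_subset_Icc_self

lemma hasDerivWithinAt_rpow_mul {f : ℝ → ℝ} {f' p r : ℝ} {s : Set ℝ}
    (hf : HasDerivWithinAt f f' s r) (hr : 0 < r) :
    HasDerivWithinAt (fun x => x ^ p * f x) (p * r ^ (p - 1) * f r + r ^ p * f') s r :=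
  (Real.hasDerivAt_rpow_const (Or.inl hr.ne')).hasDerivWithinAt.mul hf

lemma StrictMonoOn.pow_mul {f : ℝ → ℝ} {s : Set ℝ} (hf : StrictMonoOn f s)
    (hs : s ⊆ Ioi 0) (hf₀ : ∀ x ∈ s, 0 ≤ f x) (n : ℕ) :
    StrictMonoOn (fun x => x ^ n * f x) s := by
  intro x hx y hy hxy
  calc x ^ n * f x ≤ y ^ n * f x := by
        gcongr
        · exact hf₀ x hx
        · exact (hs hx).le
    _ < y ^ n * f y := mul_lt_mul_of_pos_left (hf hx hy hxy) (pow_pos (hs hy) n)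

lemma abs_le_of_mul_pow_mul_sq_le {c G q r u : ℝ} {m : ℕ} (hc : 0 < c) (hG : 0 ≤ G)
    (hr : 0 < r) (h : c * r ^ m * u ^ 2 ≤ G * r ^ q) :
    |u| ≤ √(G / c) * r ^ ((q - m) / 2) := by
  refine abs_le_of_sq_le_sq ?_ (by positivity)
  have hrm : 0 < r ^ m := pow_pos hr m
  calc u ^ 2 ≤ G / c * (r ^ q / r ^ m) := by
        rw [div_mul_div_comm, le_div_iff₀ (by positivity)]
        linarith
    _ = (√(G / c) * r ^ ((q - m) / 2)) ^ 2 := by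
        rw [mul_pow, Real.sq_sqrt (by positivity), ← Real.rpow_natCast (r ^ _),
          ← Real.rpow_mul hr.le]
        norm_num [Real.rpow_sub hr]

section Family

variable {a b : ℝ} {h h' Φ Φ' Φ'' : ℝ → ℝ}

lemma family_deriv_eq (hh : ContinuousOn h (Ioc 0 b)) (hint : IntegrableOn h (Ioc 0 b))
    (hΦ : ∀ r ∈ Ioc 0 b, Φ r = r ^ a * (1 + ∫ s in 0..r, h s))
    (hdΦ : ∀ r ∈ Ioc 0 b, HasDerivWithinAt Φ (Φ' r) (Ioc 0 b) r) :
    ∀ r ∈ Ioc 0 b, Φ' r = a * (r ^ (a - 1) * (1 + ∫ s in 0..r, h s)) + r ^ a * h r := by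
  intro r hr
  have hd := hasDerivWithinAt_rpow_mul (p := a)
    ((hasDerivWithinAt_integral_Ioc hh hint hr).const_add 1) hr.1
  refine (uniqueDiffOn_Ioc 0 b r hr).eq_deriv _ (hdΦ r hr)
    ((hd.congr hΦ (hΦ r hr)).congr_deriv ?_)
  ring

lemma family_second_deriv_eq (hdh : ∀ r ∈ Ioc 0 b, HasDerivWithinAt h (h' r) (Ioc 0 b) r)
    (hint : IntegrableOn h (Ioc 0 b))
    (hΦ' : ∀ r ∈ Ioc 0 b, Φ' r = a * (r ^ (a - 1) * (1 + ∫ s in 0..r, h s)) + r ^ a * h r)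
    (hdΦ' : ∀ r ∈ Ioc 0 b, HasDerivWithinAt Φ' (Φ'' r) (Ioc 0 b) r)
    {r : ℝ} (hr : r ∈ Ioc 0 b) :
    Φ'' r = a * ((a - 1) * r ^ (a - 1 - 1) * (1 + ∫ s in 0..r, h s) + r ^ (a - 1) * h r)
      + (a * r ^ (a - 1) * h r + r ^ a * h' r) := by
  have hh : ContinuousOn h (Ioc 0 b) := fun s hs => (hdh s hs).continuousWithinAt
  have hd := ((hasDerivWithinAt_rpow_mul (p := a - 1)
    ((hasDerivWithinAt_integral_Ioc hh hint hr).const_add 1) hr.1).const_mul a).add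
    (hasDerivWithinAt_rpow_mul (p := a) (hdh r hr) hr.1)
  exact (uniqueDiffOn_Ioc 0 b r hr).eq_deriv _ (hdΦ' r hr) (hd.congr hΦ' (hΦ' r hr))

lemma family_second_deriv_pos (ha : 1 < a) (hh : ∀ s ∈ Ioc 0 b, 0 ≤ h s)
    (hh' : ∀ s ∈ Ioc 0 b, 0 ≤ h' s)
    (hdh : ∀ r ∈ Ioc 0 b, HasDerivWithinAt h (h' r) (Ioc 0 b) r)
    (hint : IntegrableOn h (Ioc 0 b))
    (hΦ' : ∀ r ∈ Ioc 0 b, Φ' r = a * (r ^ (a - 1) * (1 + ∫ s in 0..r, h s)) + r ^ a * h r)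
    (hdΦ' : ∀ r ∈ Ioc 0 b, HasDerivWithinAt Φ' (Φ'' r) (Ioc 0 b) r) :
    ∀ r ∈ Ioc 0 b, 0 < Φ'' r := by
  intro r hr
  rw [family_second_deriv_eq hdh hint hΦ' hdΦ' hr]
  have hr₀ : 0 < r := hr.1
  have hhr : 0 ≤ h r := hh r hr
  have hh'r : 0 ≤ h' r := hh' r hr
  have ha₁ : 0 < a - 1 := sub_pos.2 ha
  have hg : 0 ≤ ∫ s in 0..r, h s := by
    rw [integral_of_le hr.1.le]
    exact setIntegral_nonneg measurableSet_Ioc fun s hs => hh s ⟨hs.1, hs.2.trans hr.2⟩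
  positivity

lemma family_deriv_le (ha : 0 ≤ a) (hh : ∀ s ∈ Ioc (0 : ℝ) 1, 0 ≤ h s ∧ h s ≤ 1)
    (hint : IntegrableOn h (Ioc 0 1))
    (hΦ' : ∀ r ∈ Ioc 0 1, Φ' r = a * (r ^ (a - 1) * (1 + ∫ s in 0..r, h s)) + r ^ a * h r)
    {r : ℝ} (hr : r ∈ Ioc 0 1) :
    Φ' r ≤ (2 * a + 1) * r ^ (a - 1) := by
  have hg : ∫ s in 0..r, h s ≤ r :=
    calc ∫ s in 0..r, h s ≤ ∫ _ in 0..r, (1 : ℝ) :=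
          integral_mono_on_of_le_Ioo hr.1.le
            ((intervalIntegrable_iff_integrableOn_Ioc_of_le hr.1.le).2
              (hint.mono_set (Ioc_subset_Ioc_right hr.2)))
            intervalIntegrable_const fun s hs => (hh s ⟨hs.1, hs.2.le.trans hr.2⟩).2
      _ = r := by simp
  have hra : r ^ a ≤ r ^ (a - 1) := Real.rpow_le_rpow_of_exponent_ge hr.1 hr.2 (by linarith)
  have hr₀ : 0 < r := hr.1
  calc Φ' r ≤ a * (r ^ (a - 1) * 2) + r ^ a * 1 := by
        rw [hΦ' r hr]
        gcongr
        · linarith [hr.2]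
        · exact (hh r hr).2
    _ ≤ (2 * a + 1) * r ^ (a - 1) := by linarith

end Family

lemma strictMonoOn_pow_mul_sq {N : ℕ} (hN : 3 ≤ N) {s : Set ℝ} (hs : s ⊆ Ioi 0)
    {Φ' u : ℝ → ℝ} (hΦ' : ∀ r ∈ s, Φ' r = ((N : ℝ) - 1) * r ^ (N - 3) * u r ^ 2)
    (hmono : StrictMonoOn Φ' s) :
    StrictMonoOn (fun r => r ^ (2 * N - 2) * u r ^ 2) s := by
  have hN₁ : (0 : ℝ) < N - 1 := by
    have : (3 : ℝ) ≤ N := by exact_mod_cast hN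
    linarith
  have hweighted := hmono.pow_mul hs fun r hr => by
    rw [hΦ' r hr]; exact mul_nonneg (mul_nonneg hN₁.le (pow_nonneg (hs hr).le _)) (sq_nonneg _)
  have hpow (r : ℝ) : r ^ (2 * N - 2) = r ^ (N + 1) * r ^ (N - 3) := by
    rw [← pow_add]; congr 1; omega
  intro x hx y hy hxy
  have := hweighted (N + 1) hx hy hxy
  simp only [hΦ' x hx, hΦ' y hy] at this
  refine lt_of_mul_lt_mul_left (a := (N : ℝ) - 1) ?_ hN₁.le
  convert this using 1 <;> simp only [hpow] <;> ring

/-- For `N ≥ 10`, `h` increasing with `0 ≤ h ≤ 1`, and `Φ, u_r` as in the family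
construction: `Φ'' > 0`, `r ↦ r^{2N−2} u_r²` is increasing, and
`|u_r(r)| ≤ D_N r^{−N/2+√(N−1)+1}` with `D_N` depending only on `N`. -/
theorem family_second_derivative (N : ℕ) (hN : 10 ≤ N) :
    ∃ D : ℝ, 0 < D ∧
      ∀ h h' Φ Φ' Φ'' u_r : ℝ → ℝ,
        ContDiffOn ℝ 2 h (Set.Ioc (0 : ℝ) 1) →
        (∀ s ∈ Set.Ioc (0 : ℝ) 1, HasDerivWithinAt h (h' s) (Set.Ioc (0 : ℝ) 1) s) →
        (∀ s ∈ Set.Ioc (0 : ℝ) 1, 0 ≤ h' s) →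
        (∀ s ∈ Set.Ioc (0 : ℝ) 1, 0 ≤ h s ∧ h s ≤ 1) →
        IntegrableOn h (Set.Ioo (0 : ℝ) 1) →
        (∀ r ∈ Set.Ioc (0 : ℝ) 1,
          Φ r = r ^ (2 * Real.sqrt ((N : ℝ) - 1)) * (1 + ∫ s in (0 : ℝ)..r, h s)) →
        (∀ r ∈ Set.Ioc (0 : ℝ) 1, HasDerivWithinAt Φ (Φ' r) (Set.Ioc (0 : ℝ) 1) r) →
        (∀ r ∈ Set.Ioc (0 : ℝ) 1, HasDerivWithinAt Φ' (Φ'' r) (Set.Ioc (0 : ℝ) 1) r) →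
        (∀ r ∈ Set.Ioc (0 : ℝ) 1, u_r r < 0) →
        (∀ r ∈ Set.Ioc (0 : ℝ) 1, Φ' r = ((N : ℝ) - 1) * r ^ (N - 3) * u_r r ^ 2) →
        (∀ r ∈ Set.Ioc (0 : ℝ) 1, 0 < Φ'' r) ∧
          StrictMonoOn (fun r => r ^ (2 * N - 2) * u_r r ^ 2) (Set.Ioc (0 : ℝ) 1) ∧
          ∀ r ∈ Set.Ioc (0 : ℝ) 1,
            |u_r r| ≤ D * r ^ (-(N : ℝ) / 2 + Real.sqrt ((N : ℝ) - 1) + 1) := by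
  have hN₁ : (1 : ℝ) < N - 1 := by
    have : (10 : ℝ) ≤ N := by exact_mod_cast hN
    linarith
  set a := 2 * √((N : ℝ) - 1) with ha_def
  have ha : 1 < a := by
    have := (Real.lt_sqrt zero_le_one).2 (by linarith : (1 : ℝ) ^ 2 < N - 1)
    linarith
  refine ⟨√((2 * a + 1) / (N - 1)), Real.sqrt_pos.2 (by positivity), ?_⟩
  intro h h' Φ Φ' Φ'' u_r _ hdh hh' hh hint hΦ hdΦ hdΦ' _ hΦ'u
  have hint' : IntegrableOn h (Ioc 0 1) := (integrableOn_Ioc_iff_integrableOn_Ioo).2 hint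
  have hΦ' := family_deriv_eq (fun s hs => (hdh s hs).continuousWithinAt) hint' hΦ hdΦ
  have hΦ''_pos :=
    family_second_deriv_pos ha (fun s hs => (hh s hs).1) hh' hdh hint' hΦ' hdΦ'
  have hΦ'_mono : StrictMonoOn Φ' (Ioc 0 1) :=
    strictMonoOn_of_hasDerivWithinAt_pos (convex_Ioc 0 1)
      (fun r hr => (hdΦ' r hr).continuousWithinAt)
      (fun r hr => (hdΦ' r (interior_subset hr)).mono interior_subset)
      (fun r hr => hΦ''_pos r (interior_subset hr))
  refine ⟨hΦ''_pos, strictMonoOn_pow_mul_sq (by omega) (fun r hr => hr.1) hΦ'u hΦ'_mono,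
    fun r hr => ?_⟩
  have hbound := hΦ'u r hr ▸ family_deriv_le (by linarith) hh hint' hΦ' hr
  convert abs_le_of_mul_pow_mul_sq_le (by linarith) (by linarith) hr.1 hbound using 3
  rw [Nat.cast_sub (by omega : 3 ≤ N), ha_def]
  push_cast
  ring
end
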